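/- Let π be a probability density on R^n × R^m with conditional density π(x|y), and let ρ be an everywhere-positive differentiable reference density on R^n. Let w_θ : R^n × R^m → R^n be differentiable in x. Assume: (i) π(x|y) is differentiable in x; (ii) E_π[‖w_θ(x,y)‖²] < ∞; (iii) E_π[‖∇_x log(π(x|y)/ρ(x))‖²] < ∞; (iv) for every y, π(x|y) w_θ(x,y) → 0 as ‖x‖ → ∞; and (v) all integrals appearing below are finite. Then (1/2) E_π[‖w_θ(x,y) − ∇_x log(π(x|y)/ρ(x))‖²] = E_π[ (1/2) w_θ(x,y)ᵀ w_θ(x,y) + tr(∇_x w_θ(x,y)) + ∇_x log ρ(x)ᵀ w_θ(x,y) ] + C, where C = (1/2) E_π[‖∇_x log(π(x|y)/ρ(x))‖²] depends only on π and ρ. -/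

import Mathlib

open MeasureTheory Matrix Filter

/-- Partial derivative of `f : ℝⁿ → ℝ` in the `i`-th coordinate at `x`. -/
noncomputable def pd {n : ℕ} (f : (Fin n → ℝ) → ℝ) (i : Fin n) (x : Fin n → ℝ) : ℝ :=
  deriv (fun t => f (Function.update x i t)) (x i)

/-!
Expanding the square reduces the claim to the Stein-type identity
`E_π[wθ ⬝ w + tr ∇ₓwθ + ∇ₓ log ρ ⬝ wθ] = 0`. For fixed `y`, the identity
`∇ₓ πc = πc (∇ₓ log (πc / ρ) + ∇ₓ log ρ)` (which also holds at zeros of `πc`, where `πc` is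
minimal) makes `πc` times this integrand the divergence of the integrable field `πc wθ`.
The divergence of an integrable field with integrable divergence integrates to zero: by Fubini the
slice integrals of `|πc wθ|` over the hyperplanes `xᵢ = t` are integrable in `t`, so there are
arbitrarily large cubes on whose faces they are small, and the divergence theorem on these
cubes bounds the integral of the divergence by an arbitrarily small quantity.
-/
open Set

theorem MeasureTheory.Integrable.exists_mem_norm_lt {α E : Type*} [MeasurableSpace α]
    [NormedAddCommGroup E] {μ : Measure α} {f : α → E} {P : α → Prop} {s : Set α}
    (hf : Integrable f μ)
    (hP : ∀ᵐ x ∂μ, P x) (hs : μ s = ⊤) {ε : ℝ} (hε : 0 < ε) :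
    ∃ x ∈ s, ‖f x‖ < ε ∧ P x := by
  by_contra! h
  have hsub : s ⊆ {x | ε ≤ ‖f x‖} ∪ {x | ¬P x} := fun x hx => by
    by_cases hPx : P x
    · exact Or.inl (not_lt.1 fun hlt => h x hx hlt hPx)
    · exact Or.inr hPx
  have hlt : μ s < ⊤ := calc
    μ s ≤ μ {x | ε ≤ ‖f x‖} + μ {x | ¬P x} := (measure_mono hsub).trans (measure_union_le _ _)
    _ < ⊤ := by rw [ae_iff.1 hP, add_zero]; exact hf.measure_norm_ge_lt_top hε
  exact hlt.ne hs

theorem tendsto_setIntegral_cube {ι E : Type*} [Fintype ι] [NormedAddCommGroup E]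
    [NormedSpace ℝ E] {g : (ι → ℝ) → E} (hg : Integrable g) :
    Tendsto (fun r : ℝ × ℝ => ∫ x in Icc (fun _ => r.1) (fun _ => r.2), g x)
      (atBot ×ˢ atTop) (nhds (∫ x, g x)) := by
  simp_rw [← integral_indicator measurableSet_Icc]
  refine tendsto_integral_filter_of_dominated_convergence (fun x => ‖g x‖)
    (Eventually.of_forall fun _ => hg.aestronglyMeasurable.indicator measurableSet_Icc)
    (Eventually.of_forall fun _ => ae_of_all _ fun _ => norm_indicator_le_norm_self _ _)
    hg.norm (ae_of_all _ fun x => tendsto_const_nhds.congr' ?_)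
  filter_upwards [prod_mem_prod (Iic_mem_atBot (-‖x‖)) (Ici_mem_atTop ‖x‖)]
    with r ⟨hr₁, hr₂⟩
  have hx : x ∈ Icc (fun _ => r.1) (fun _ => r.2) :=
    ⟨fun i => hr₁.trans (abs_le.1 (norm_le_pi_norm x i)).1,
      fun i => (abs_le.1 (norm_le_pi_norm x i)).2.trans hr₂⟩
  rw [indicator_of_mem hx]

theorem integrable_comp_insertNth {n : ℕ} {E : Type*} [NormedAddCommGroup E]
    {g : (Fin (n + 1) → ℝ) → E} (hg : Integrable g) (i : Fin (n + 1)) :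
    Integrable (fun p : ℝ × (Fin n → ℝ) => g (i.insertNth p.1 p.2)) := by
  have e := (volume_preserving_piFinSuccAbove (fun _ : Fin (n + 1) => ℝ) i).symm
  exact (e.integrable_comp_emb (MeasurableEquiv.measurableEmbedding _)).2 hg

section Divergence

variable {n : ℕ} {E : Type*} [NormedAddCommGroup E] [NormedSpace ℝ E]
  {F : (Fin (n + 1) → ℝ) → Fin (n + 1) → E}
  {F' : (Fin (n + 1) → ℝ) → (Fin (n + 1) → ℝ) →L[ℝ] Fin (n + 1) → E}

theorem norm_setIntegral_comp_insertNth_apply_le {s : Set (Fin n → ℝ)} {i : Fin (n + 1)} {t : ℝ}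
    (h : Integrable fun z => ‖F (i.insertNth t z)‖) :
    ‖∫ z in s, F (i.insertNth t z) i‖ ≤ ∫ z, ‖F (i.insertNth t z)‖ :=
  (norm_integral_le_of_norm_le h.integrableOn (ae_of_all _ fun _ => norm_le_pi_norm _ i)).trans
    (setIntegral_le_integral h (ae_of_all _ fun _ => norm_nonneg _))

theorem norm_setIntegral_divergence_le [CompleteSpace E] (hF : ∀ x, HasFDerivAt F (F' x) x)
    (hdiv : Integrable fun x => ∑ i, F' x (Pi.single i 1) i) {a b : Fin (n + 1) → ℝ} (hab : a ≤ b)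
    (ha : ∀ i : Fin (n + 1), Integrable fun z : Fin n → ℝ => ‖F (i.insertNth (a i) z)‖)
    (hb : ∀ i : Fin (n + 1), Integrable fun z : Fin n → ℝ => ‖F (i.insertNth (b i) z)‖) :
    ‖∫ x in Icc a b, ∑ i, F' x (Pi.single i 1) i‖ ≤
      ∑ i : Fin (n + 1), ((∫ z, ‖F (i.insertNth (b i) z)‖) + ∫ z, ‖F (i.insertNth (a i) z)‖) := by
  have hcont : Continuous F := continuous_iff_continuousAt.2 fun x => (hF x).continuousAt
  rw [integral_divergence_of_hasFDerivAt_off_countable a b hab F F' ∅ countable_empty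
    hcont.continuousOn (fun x _ => hF x) hdiv.integrableOn]
  refine (norm_sum_le _ _).trans (Finset.sum_le_sum fun i _ => (norm_sub_le _ _).trans ?_)
  exact add_le_add (norm_setIntegral_comp_insertNth_apply_le (hb i))
    (norm_setIntegral_comp_insertNth_apply_le (ha i))

end Divergence

theorem integral_divergence_eq_zero_of_integrable {n : ℕ} {E : Type*} [NormedAddCommGroup E]
    [NormedSpace ℝ E] [CompleteSpace E] {F : (Fin n → ℝ) → Fin n → E}
    {F' : (Fin n → ℝ) → (Fin n → ℝ) →L[ℝ] Fin n → E} (hF : ∀ x, HasFDerivAt F (F' x) x)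
    (hFi : Integrable F) (hdiv : Integrable fun x => ∑ i, F' x (Pi.single i 1) i) :
    ∫ x, ∑ i, F' x (Pi.single i 1) i = 0 := by
  rcases n with _ | n
  · simp
  set Q : Fin (n + 1) → ℝ → ℝ := fun i t => ∫ z, ‖F (i.insertNth t z)‖
  have hslice i := integrable_comp_insertNth hFi.norm i
  have hH : Integrable fun t => ∑ i, Q i t :=
    integrable_finsetSum _ fun i _ => (hslice i).integral_prod_left
  have hgood : ∀ᵐ t, ∀ i : Fin (n + 1), Integrable fun z => ‖F (i.insertNth t z)‖ :=
    ae_all_iff.2 fun i => (hslice i).prod_right_ae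
  refine norm_le_zero_iff.1 (le_of_forall_pos_le_add fun ε hε => ?_)
  obtain ⟨⟨N₁, N₂⟩, -, hN⟩ := (atBot_basis.prod atTop_basis).eventually_iff.1
    (Metric.tendsto_nhds.1 (tendsto_setIntegral_cube hdiv) (ε / 2) (by positivity))
  obtain ⟨R₁, hR₁, hQR₁, hgR₁⟩ := hH.exists_mem_norm_lt hgood (Real.volume_Iic (a := min N₁ N₂))
    (show 0 < ε / 4 by positivity)
  obtain ⟨R₂, hR₂, hQR₂, hgR₂⟩ := hH.exists_mem_norm_lt hgood (Real.volume_Ici (a := max N₁ N₂))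
    (show 0 < ε / 4 by positivity)
  have hR₁₂ : R₁ ≤ R₂ := (hR₁.trans min_le_max).trans hR₂
  have hcube := norm_setIntegral_divergence_le hF hdiv (a := fun _ => R₁) (b := fun _ => R₂)
    (fun _ => hR₁₂) hgR₁ hgR₂
  have htail := hN (x := (R₁, R₂)) ⟨show R₁ ≤ N₁ from hR₁.trans (min_le_left _ _),
    show N₂ ≤ R₂ from (le_max_right _ _).trans hR₂⟩
  rw [dist_comm, dist_eq_norm] at htail
  rw [Finset.sum_add_distrib] at hcube
  rw [Real.norm_eq_abs] at hQR₁ hQR₂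
  linarith [(norm_sub_norm_le _ _).trans_lt htail, le_abs_self (∑ i, Q i R₁),
    le_abs_self (∑ i, Q i R₂)]

section PartialDerivatives

variable {n : ℕ} {f : (Fin n → ℝ) → ℝ} {x : Fin n → ℝ}

theorem HasFDerivAt.hasDerivAt_update {f' : (Fin n → ℝ) →L[ℝ] ℝ} (h : HasFDerivAt f f' x)
    (i : Fin n) :
    HasDerivAt (fun t => f (Function.update x i t)) (f' (Pi.single i 1)) (x i) := by
  rw [← Function.update_eq_self i x] at h
  exact h.comp_hasDerivAt (x i) (_root_.hasDerivAt_update x i (x i))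

theorem HasFDerivAt.pd_eq {f' : (Fin n → ℝ) →L[ℝ] ℝ} (h : HasFDerivAt f f' x) (i : Fin n) :
    pd f i x = f' (Pi.single i 1) :=
  (h.hasDerivAt_update i).deriv

theorem pd_eq_mul_pd_log_div_add_pd_log {ρ : (Fin n → ℝ) → ℝ} (hf : DifferentiableAt ℝ f x)
    (hf₀ : ∀ y, 0 ≤ f y) (hρ : DifferentiableAt ℝ ρ x) (hρx : 0 < ρ x) (i : Fin n) :
    pd f i x =
      f x * (pd (fun y => Real.log (f y / ρ y)) i x + pd (fun y => Real.log (ρ y)) i x) := by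
  rcases (hf₀ x).eq_or_lt with hfx | hfx
  · have hmin : IsLocalMin f x := Eventually.of_forall fun y => hfx ▸ hf₀ y
    rw [hf.hasFDerivAt.pd_eq, hmin.fderiv_eq_zero, ← hfx, zero_mul, _root_.zero_apply]
  have hdf := hf.hasFDerivAt.hasDerivAt_update i
  have hdρ := hρ.hasFDerivAt.hasDerivAt_update i
  have hρx' : ρ (Function.update x i (x i)) ≠ 0 := by simpa using hρx.ne'
  have hfρx : f (Function.update x i (x i)) / ρ (Function.update x i (x i)) ≠ 0 := by
    simp [hfx.ne', hρx.ne']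
  simp only [pd]
  rw [(hdρ.log hρx').deriv, ((hdf.fun_div hdρ hρx').log hfρx).deriv, hdf.deriv]
  simp only [Function.update_eq_self]
  field_simp
  ring

end PartialDerivatives

theorem norm_le_one_add_sum_sq {ι : Type*} [Fintype ι] (v : ι → ℝ) :
    ‖v‖ ≤ 1 + ∑ i, v i ^ 2 := by
  refine (pi_norm_le_iff_of_nonneg (by positivity)).2 fun i => ?_
  have hi : v i ^ 2 ≤ ∑ j, v j ^ 2 :=
    Finset.single_le_sum (fun j _ => sq_nonneg (v j)) (Finset.mem_univ i)
  rw [Real.norm_eq_abs]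
  nlinarith [sq_abs (v i), sq_nonneg (|v i| - 1)]

theorem integral_mul_stein_eq_zero {n : ℕ} {p ρ : (Fin n → ℝ) → ℝ} {v : (Fin n → ℝ) → Fin n → ℝ}
    (hp : Differentiable ℝ p) (hp₀ : ∀ x, 0 ≤ p x) (hρ : Differentiable ℝ ρ)
    (hρ₀ : ∀ x, 0 < ρ x) (hv : Differentiable ℝ v) (hp_int : Integrable p)
    (hpv : Integrable fun x => p x * ∑ i, v x i ^ 2)
    (hint : Integrable fun x => p x * (∑ i, v x i * pd (fun y => Real.log (p y / ρ y)) i x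
      + ∑ i, pd (fun y => v y i) i x + ∑ i, pd (fun y => Real.log (ρ y)) i x * v x i)) :
    ∫ x, p x * (∑ i, v x i * pd (fun y => Real.log (p y / ρ y)) i x
      + ∑ i, pd (fun y => v y i) i x + ∑ i, pd (fun y => Real.log (ρ y)) i x * v x i) = 0 := by
  have hF : ∀ x, HasFDerivAt (fun y => p y • v y)
      (p x • fderiv ℝ v x + (fderiv ℝ p x).smulRight (v x)) x :=
    fun x => (hp x).hasFDerivAt.smul (hv x).hasFDerivAt
  have hdiv : ∀ x, p x * (∑ i, v x i * pd (fun y => Real.log (p y / ρ y)) i x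
      + ∑ i, pd (fun y => v y i) i x + ∑ i, pd (fun y => Real.log (ρ y)) i x * v x i) =
      ∑ i, (p x • fderiv ℝ v x + (fderiv ℝ p x).smulRight (v x)) (Pi.single i 1) i := by
    intro x
    simp only [mul_add, Finset.mul_sum, ← Finset.sum_add_distrib]
    refine Finset.sum_congr rfl fun i _ => ?_
    have hvi : pd (fun y => v y i) i x = fderiv ℝ v x (Pi.single i 1) i :=
      (hasFDerivAt_pi'.1 (hv x).hasFDerivAt i).pd_eq i
    simp only [_root_.add_apply, _root_.smul_apply, ContinuousLinearMap.smulRight_apply,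
      Pi.add_apply, Pi.smul_apply, smul_eq_mul]
    rw [hvi, ← ((hp x).hasFDerivAt.pd_eq i),
      pd_eq_mul_pd_log_div_add_pd_log (hp x) hp₀ (hρ x) (hρ₀ x) i]
    ring
  have hF_int : Integrable fun y => p y • v y := by
    refine (hp_int.add hpv).mono' (hp.continuous.smul hv.continuous).aestronglyMeasurable
      (ae_of_all _ fun x => ?_)
    calc ‖p x • v x‖ = p x * ‖v x‖ := by rw [norm_smul, Real.norm_of_nonneg (hp₀ x)]
      _ ≤ p x * (1 + ∑ i, v x i ^ 2) :=
        mul_le_mul_of_nonneg_left (norm_le_one_add_sum_sq (v x)) (hp₀ x)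
      _ = p x + p x * ∑ i, v x i ^ 2 := mul_one_add _ _
  simp only [hdiv] at hint ⊢
  exact integral_divergence_eq_zero_of_integrable hF hF_int hint

theorem integral_prod_mul_eq_integral_marginal_mul {α β : Type*} [MeasurableSpace α]
    [MeasurableSpace β] {μ : Measure α} {ν : Measure β} [SFinite μ] [SFinite ν]
    {π πc : α → β → ℝ} {πY : β → ℝ} {G : α × β → ℝ} (hπ₀ : ∀ x y, 0 ≤ π x y)
    (hπ : Integrable (fun z : α × β => π z.1 z.2) (μ.prod ν)) (hπY : ∀ y, πY y = ∫ x, π x y ∂μ)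
    (hπc : ∀ x y, πc x y = π x y / πY y)
    (hG : Integrable (fun z : α × β => π z.1 z.2 * G z) (μ.prod ν)) :
    ∫ z, π z.1 z.2 * G z ∂μ.prod ν = ∫ y, πY y * ∫ x, πc x y * G (x, y) ∂μ ∂ν := by
  rw [integral_prod_symm _ hG]
  refine integral_congr_ae ?_
  filter_upwards [hπ.prod_left_ae] with y hy
  rcases eq_or_ne (πY y) 0 with h0 | h0
  · have hπy : (fun x => π x y) =ᵐ[μ] 0 :=
      (integral_eq_zero_iff_of_nonneg (fun x => hπ₀ x y) hy).1 ((hπY y).symm.trans h0)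
    rw [h0, zero_mul]
    refine integral_eq_zero_of_ae ?_
    filter_upwards [hπy] with x hx
    simp [hx]
  · rw [← integral_const_mul]
    congr with x
    rw [hπc]
    field_simp

theorem integral_mul_joint_stein_eq_zero {n : ℕ} {β : Type*} [MeasureSpace β]
    [SFinite (volume : Measure β)] {π πc : (Fin n → ℝ) → β → ℝ} {πY : β → ℝ}
    {ρ : (Fin n → ℝ) → ℝ} {wθ w : (Fin n → ℝ) → β → Fin n → ℝ} (hπ₀ : ∀ x y, 0 ≤ π x y)
    (hπ : Integrable fun z : (Fin n → ℝ) × β => π z.1 z.2) (hπY : ∀ y, πY y = ∫ x, π x y)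
    (hπc : ∀ x y, πc x y = π x y / πY y) (hρ₀ : ∀ x, 0 < ρ x) (hρ : Differentiable ℝ ρ)
    (hw : ∀ x y i, w x y i = pd (fun x' => Real.log (πc x' y / ρ x')) i x)
    (hwθ : ∀ y, Differentiable ℝ fun x => wθ x y) (hπc_diff : ∀ y, Differentiable ℝ fun x => πc x y)
    (hwθ_L2 : Integrable fun z : (Fin n → ℝ) × β => π z.1 z.2 * ∑ i, wθ z.1 z.2 i ^ 2)
    (hint : Integrable fun z : (Fin n → ℝ) × β => π z.1 z.2 * (∑ i, wθ z.1 z.2 i * w z.1 z.2 i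
      + ∑ i, pd (fun x => wθ x z.2 i) i z.1
      + ∑ i, pd (fun x => Real.log (ρ x)) i z.1 * wθ z.1 z.2 i)) :
    ∫ z : (Fin n → ℝ) × β, π z.1 z.2 * (∑ i, wθ z.1 z.2 i * w z.1 z.2 i
      + ∑ i, pd (fun x => wθ x z.2 i) i z.1
      + ∑ i, pd (fun x => Real.log (ρ x)) i z.1 * wθ z.1 z.2 i) = 0 := by
  rw [Measure.volume_eq_prod, integral_prod_mul_eq_integral_marginal_mul hπ₀ hπ hπY hπc hint]
  refine integral_eq_zero_of_ae ?_
  filter_upwards [hπ.prod_left_ae, hwθ_L2.prod_left_ae, hint.prod_left_ae] with y hπy hwθy hinty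
  have hπY₀ : 0 ≤ πY y := hπY y ▸ integral_nonneg fun x => hπ₀ x y
  have hcond {f : (Fin n → ℝ) → ℝ} (hf : Integrable fun x => π x y * f x) :
      Integrable fun x => πc x y * f x := by
    refine (hf.div_const (πY y)).congr (ae_of_all _ fun x => ?_)
    simp only [hπc]
    ring
  have hπcy : Integrable fun x => πc x y := by simpa using hcond (f := 1) (by simpa using hπy)
  simp only [hw] at hinty ⊢
  rw [Pi.zero_apply, integral_mul_stein_eq_zero (hπc_diff y)
    (fun x => hπc x y ▸ div_nonneg (hπ₀ x y) hπY₀) hρ hρ₀ (hwθ y) hπcy (hcond hwθy)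
    (hcond hinty), mul_zero]

theorem sum_sub_sq_eq {ι : Type*} [Fintype ι] (a b : ι → ℝ) :
    ∑ i, (a i - b i) ^ 2 = ∑ i, a i ^ 2 - 2 * ∑ i, a i * b i + ∑ i, b i ^ 2 := by
  simp only [sub_sq, Finset.sum_add_distrib, Finset.sum_sub_distrib, Finset.mul_sum, mul_assoc]

section Objective

variable {α ι : Type*} [MeasurableSpace α] [Fintype ι] {μ : Measure α} {P D L : α → ℝ}
  {a b : α → ι → ℝ}

theorem integrable_mul_stein_of_objective (hA : Integrable (fun z => P z * ∑ i, a z i ^ 2) μ)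
    (hB : Integrable (fun z => P z * ∑ i, b z i ^ 2) μ)
    (hS : Integrable (fun z => P z * ∑ i, (a z i - b z i) ^ 2) μ)
    (hO : Integrable (fun z => P z * ((1 / 2) * ∑ i, a z i ^ 2 + D z + L z)) μ) :
    Integrable (fun z => P z * (∑ i, a z i * b z i + D z + L z)) μ := by
  refine ((((hA.add hB).sub hS).div_const 2).add (hO.sub (hA.const_mul (1 / 2)))).congr
    (ae_of_all _ fun z => ?_)
  simp only [Pi.add_apply, Pi.sub_apply, sum_sub_sq_eq]
  ring

theorem half_integral_mul_sum_sq_sub (hB : Integrable (fun z => P z * ∑ i, b z i ^ 2) μ)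
    (hO : Integrable (fun z => P z * ((1 / 2) * ∑ i, a z i ^ 2 + D z + L z)) μ)
    (hZ : Integrable (fun z => P z * (∑ i, a z i * b z i + D z + L z)) μ)
    (hZ₀ : ∫ z, P z * (∑ i, a z i * b z i + D z + L z) ∂μ = 0) :
    (1 / 2) * ∫ z, P z * ∑ i, (a z i - b z i) ^ 2 ∂μ =
      (∫ z, P z * ((1 / 2) * ∑ i, a z i ^ 2 + D z + L z) ∂μ)
        + (1 / 2) * ∫ z, P z * ∑ i, b z i ^ 2 ∂μ := by
  calc (1 / 2) * ∫ z, P z * ∑ i, (a z i - b z i) ^ 2 ∂μ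
      = ∫ z, (P z * ((1 / 2) * ∑ i, a z i ^ 2 + D z + L z) + (1 / 2) * (P z * ∑ i, b z i ^ 2))
          - P z * (∑ i, a z i * b z i + D z + L z) ∂μ := by
        rw [← integral_const_mul]
        congr with z
        rw [sum_sub_sq_eq]
        ring
    _ = _ := by
        rw [integral_sub (hO.fun_add (hB.const_mul _)) hZ, hZ₀, sub_zero,
          integral_add hO (hB.const_mul _), integral_const_mul]

end Objective

theorem score_ratio_matching_objective_general {n m : ℕ}
    (π : (Fin n → ℝ) → (Fin m → ℝ) → ℝ)
    (πY : (Fin m → ℝ) → ℝ) (πc : (Fin n → ℝ) → (Fin m → ℝ) → ℝ)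
    (ρ : (Fin n → ℝ) → ℝ)
    (wθ w : (Fin n → ℝ) → (Fin m → ℝ) → Fin n → ℝ)
    -- π is a probability density on ℝⁿ × ℝᵐ with marginal πY and conditional πc
    (hπ_nonneg : ∀ x y, 0 ≤ π x y)
    (hπ_one : ∫ z : (Fin n → ℝ) × (Fin m → ℝ), π z.1 z.2 = 1)
    (hπY : ∀ y, πY y = ∫ x, π x y)
    (hπc : ∀ x y, πc x y = π x y / πY y)
    -- ρ is an everywhere-positive differentiable density on ℝⁿ
    (hρ_pos : ∀ x, 0 < ρ x)
    (hρ_diff : Differentiable ℝ ρ)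
    -- w is the score ratio ∇ₓ log(πc(x|y)/ρ(x))
    (hw : ∀ x y i, w x y i = pd (fun x' => Real.log (πc x' y / ρ x')) i x)
    -- wθ is differentiable in x
    (hwθ_diff : ∀ y, Differentiable ℝ (fun x => wθ x y))
    -- (i) πc(x|y) is differentiable in x
    (hπc_diff : ∀ y, Differentiable ℝ (fun x => πc x y))
    -- (ii) E_π ‖wθ‖² < ∞
    (hwθ_L2 : Integrable (fun z : (Fin n → ℝ) × (Fin m → ℝ) =>
      π z.1 z.2 * ∑ i, (wθ z.1 z.2 i) ^ 2))
    -- (iii) E_π ‖∇ₓ log(πc/ρ)‖² < ∞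
    (hw_L2 : Integrable (fun z : (Fin n → ℝ) × (Fin m → ℝ) =>
      π z.1 z.2 * ∑ i, (w z.1 z.2 i) ^ 2))
    -- (v) integrability of the remaining integrands below
    (hdiff_int : Integrable (fun z : (Fin n → ℝ) × (Fin m → ℝ) =>
      π z.1 z.2 * ∑ i, (wθ z.1 z.2 i - w z.1 z.2 i) ^ 2))
    (hobj_int : Integrable (fun z : (Fin n → ℝ) × (Fin m → ℝ) =>
      π z.1 z.2 * ((1 / 2) * ∑ i, (wθ z.1 z.2 i) ^ 2
        + (∑ i, pd (fun x => wθ x z.2 i) i z.1)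
        + ∑ i, pd (fun x => Real.log (ρ x)) i z.1 * wθ z.1 z.2 i))) :
    (1 / 2) * ∫ z : (Fin n → ℝ) × (Fin m → ℝ),
        π z.1 z.2 * ∑ i, (wθ z.1 z.2 i - w z.1 z.2 i) ^ 2
      = (∫ z : (Fin n → ℝ) × (Fin m → ℝ),
          π z.1 z.2 * ((1 / 2) * ∑ i, (wθ z.1 z.2 i) ^ 2
            + (∑ i, pd (fun x => wθ x z.2 i) i z.1)
            + ∑ i, pd (fun x => Real.log (ρ x)) i z.1 * wθ z.1 z.2 i))
        + (1 / 2) * ∫ z : (Fin n → ℝ) × (Fin m → ℝ),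
            π z.1 z.2 * ∑ i, (w z.1 z.2 i) ^ 2 := by
  have hπ_int : Integrable fun z : (Fin n → ℝ) × (Fin m → ℝ) => π z.1 z.2 :=
    Integrable.of_integral_ne_zero (by rw [hπ_one]; exact one_ne_zero)
  have hstein_int := integrable_mul_stein_of_objective hwθ_L2 hw_L2 hdiff_int hobj_int
  exact half_integral_mul_sum_sq_sub hw_L2 hobj_int hstein_int
    (integral_mul_joint_stein_eq_zero hπ_nonneg hπ_int hπY hπc hρ_pos hρ_diff hw hwθ_diff
      hπc_diff hwθ_L2 hstein_int)

/-- **Score ratio matching objective (Theorem 1).**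
Given a joint density `π` on ℝⁿ × ℝᵐ with conditional `πc(x|y) = π(x,y)/π_Y(y)`,
an everywhere-positive differentiable reference density `ρ` on ℝⁿ, and a score
network `wθ` differentiable in `x`, under the stated integrability and decay
assumptions the (weighted) L² score-ratio matching objective equals the implicit
objective plus a constant `C = ½ E_π ‖∇ₓ log(πc/ρ)‖²` independent of `wθ`. -/
theorem score_ratio_matching_objective {n m : ℕ}
    (π : (Fin n → ℝ) → (Fin m → ℝ) → ℝ)
    (πY : (Fin m → ℝ) → ℝ) (πc : (Fin n → ℝ) → (Fin m → ℝ) → ℝ)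
    (ρ : (Fin n → ℝ) → ℝ)
    (wθ w : (Fin n → ℝ) → (Fin m → ℝ) → Fin n → ℝ)
    -- π is a probability density on ℝⁿ × ℝᵐ with marginal πY and conditional πc
    (hπ_nonneg : ∀ x y, 0 ≤ π x y)
    (hπ_one : ∫ z : (Fin n → ℝ) × (Fin m → ℝ), π z.1 z.2 = 1)
    (hπY : ∀ y, πY y = ∫ x, π x y)
    (hπc : ∀ x y, πc x y = π x y / πY y)
    -- ρ is an everywhere-positive differentiable density on ℝⁿ
    (hρ_pos : ∀ x, 0 < ρ x)
    (hρ_diff : Differentiable ℝ ρ)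
    (hρ_one : ∫ x, ρ x = 1)
    -- w is the score ratio ∇ₓ log(πc(x|y)/ρ(x))
    (hw : ∀ x y i, w x y i = pd (fun x' => Real.log (πc x' y / ρ x')) i x)
    -- wθ is differentiable in x
    (hwθ_diff : ∀ y, Differentiable ℝ (fun x => wθ x y))
    -- (i) πc(x|y) is differentiable in x
    (hπc_diff : ∀ y, Differentiable ℝ (fun x => πc x y))
    -- (ii) E_π ‖wθ‖² < ∞
    (hwθ_L2 : Integrable (fun z : (Fin n → ℝ) × (Fin m → ℝ) =>
      π z.1 z.2 * ∑ i, (wθ z.1 z.2 i) ^ 2))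
    -- (iii) E_π ‖∇ₓ log(πc/ρ)‖² < ∞
    (hw_L2 : Integrable (fun z : (Fin n → ℝ) × (Fin m → ℝ) =>
      π z.1 z.2 * ∑ i, (w z.1 z.2 i) ^ 2))
    -- (iv) πc(x|y) wθ(x,y) → 0 as ‖x‖ → ∞, for every y
    (hdecay : ∀ y, Tendsto (fun x => πc x y • wθ x y) (cocompact (Fin n → ℝ)) (nhds 0))
    -- (v) integrability of the remaining integrands below
    (hdiff_int : Integrable (fun z : (Fin n → ℝ) × (Fin m → ℝ) =>
      π z.1 z.2 * ∑ i, (wθ z.1 z.2 i - w z.1 z.2 i) ^ 2))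
    (hobj_int : Integrable (fun z : (Fin n → ℝ) × (Fin m → ℝ) =>
      π z.1 z.2 * ((1 / 2) * ∑ i, (wθ z.1 z.2 i) ^ 2
        + (∑ i, pd (fun x => wθ x z.2 i) i z.1)
        + ∑ i, pd (fun x => Real.log (ρ x)) i z.1 * wθ z.1 z.2 i))) :
    (1 / 2) * ∫ z : (Fin n → ℝ) × (Fin m → ℝ),
        π z.1 z.2 * ∑ i, (wθ z.1 z.2 i - w z.1 z.2 i) ^ 2
      = (∫ z : (Fin n → ℝ) × (Fin m → ℝ),
          π z.1 z.2 * ((1 / 2) * ∑ i, (wθ z.1 z.2 i) ^ 2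
            + (∑ i, pd (fun x => wθ x z.2 i) i z.1)
            + ∑ i, pd (fun x => Real.log (ρ x)) i z.1 * wθ z.1 z.2 i))
        + (1 / 2) * ∫ z : (Fin n → ℝ) × (Fin m → ℝ),
            π z.1 z.2 * ∑ i, (w z.1 z.2 i) ^ 2 :=
  score_ratio_matching_objective_general π πY πc ρ wθ w hπ_nonneg hπ_one hπY hπc hρ_pos hρ_diff hw
    hwθ_diff hπc_diff hwθ_L2 hw_L2 hdiff_int hobj_int
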